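/- For every integer N ≥ 2 and all paths ω, ω̃ ∈ Ω with ‖ω − ω̃‖ < 2^{−N}, the Lebesgue-partition counts satisfy m^{(N−2)}(ω) ≤ m^{(N)}(ω̃). -/

import Mathlib

open MeasureTheory Set Filter

noncomputable section

namespace RobustFinance

/-- Continuous nonnegative paths on `[0,T]` (extended constantly outside `[0,T]`),
starting at `(1,…,1)`.  As a subtype of the bounded continuous functions, the induced
metric is exactly the sup-norm distance `sup_{0 ≤ t ≤ T} max_i |ω_i(t) − υ_i(t)|`. -/
def Path (T : ℝ) (m : ℕ) : Type :=
  {ω : BoundedContinuousFunction ℝ (Fin m → ℝ) //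
    (∀ t i, 0 ≤ ω t i) ∧ (∀ i, ω 0 i = 1) ∧
    (∀ t, t ≤ 0 → ω t = ω 0) ∧ (∀ t, T ≤ t → ω t = ω T)}

instance instMetricPath (T : ℝ) (m : ℕ) : MetricSpace (Path T m) := by
  unfold Path; infer_instance

instance instMeasPath (T : ℝ) (m : ℕ) : MeasurableSpace (Path T m) := borel _

instance instBorelPath (T : ℝ) (m : ℕ) : BorelSpace (Path T m) := ⟨rfl⟩

variable {T : ℝ} {m : ℕ}

/-- The canonical (coordinate) process `S_t(ω) = ω_t`. -/
def proc (T : ℝ) (m : ℕ) (t : ℝ) (ω : Path T m) : Fin m → ℝ := ω.1 t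

lemma measurable_proc (T : ℝ) (m : ℕ) (t : ℝ) : Measurable (proc T m t) := by
  have h1 : Continuous fun ω : Path T m =>
      (ω.1 : BoundedContinuousFunction ℝ (Fin m → ℝ)) := continuous_subtype_val
  exact ((continuous_eval_const (F := BoundedContinuousFunction ℝ (Fin m → ℝ)) t).comp h1).measurable

/-- The natural filtration of the canonical process. -/
def natFilt (T : ℝ) (m : ℕ) : Filtration ℝ (instMeasPath T m) where
  seq t := ⨆ u ∈ Set.Icc (0:ℝ) t, MeasurableSpace.comap (proc T m u) inferInstance
  mono' := fun _ _ hst => biSup_mono fun u hu => ⟨hu.1, hu.2.trans hst⟩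
  le' := fun _ => iSup₂_le fun u _ => measurable_iff_comap_le.mp (measurable_proc T m u)

/-- A martingale measure: a Borel probability measure on the path space under which the
canonical process is an integrable martingale in its natural filtration. -/
def IsMartingaleMeasure (μ : Measure (Path T m)) : Prop :=
  IsProbabilityMeasure μ ∧ (∀ t : ℝ, Integrable (proc T m t) μ) ∧
    Martingale (proc T m) (natFilt T m) μ

/-- Martingale measures giving full mass to a set `I`. -/
def MI (T : ℝ) (m : ℕ) (I : Set (Path T m)) : Set (Measure (Path T m)) :=
  {μ | IsMartingaleMeasure μ ∧ μ I = 1}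

/-- First `d` coordinates of a `d+K` dimensional vector. -/
def liftFin (d K : ℕ) (x : Fin (d + K) → ℝ) : Fin d → ℝ := fun j => x (Fin.castAdd K j)

/-- The information space determined by `K` continuously traded options on the
first `d` coordinates, with given initial prices. -/
def InfoSpace (T : ℝ) (d K : ℕ) (Xc : Fin K → (Fin d → ℝ) → ℝ) (pc : Fin K → ℝ) :
    Set (Path T (d + K)) :=
  {ω | ∀ i : Fin K, ω.1 T (Fin.natAdd d i) = Xc i (liftFin d K (ω.1 T)) / pc i}

/-- Standing regularity assumptions on the continuously traded options: positive prices and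
nonnegative, bounded and uniformly continuous payoffs on the nonnegative orthant. -/
def OptionData (d K : ℕ) (Xc : Fin K → (Fin d → ℝ) → ℝ) (pc : Fin K → ℝ) : Prop :=
  ∀ i : Fin K, 0 < pc i ∧ (∀ x : Fin d → ℝ, (∀ j, 0 ≤ x j) → 0 ≤ Xc i x) ∧
    (∃ C, ∀ x : Fin d → ℝ, (∀ j, 0 ≤ x j) → |Xc i x| ≤ C) ∧
    UniformContinuousOn (Xc i) {x | ∀ j, 0 ≤ x j}

/-- Assumption A1: either there are no continuously traded options, or all nearby prices of
the continuously traded options are attained by some martingale measure giving full mass to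
the correspondingly re-scaled information space. -/
def AssumptionA1 (T : ℝ) (d K : ℕ) (Xc : Fin K → (Fin d → ℝ) → ℝ) (pc : Fin K → ℝ) : Prop :=
  K = 0 ∨ ∃ ε > (0:ℝ), ∀ p : Fin K → ℝ, (∀ i, |p i - pc i| ≤ ε) →
    ∃ μ : Measure (Path T (d + K)), IsMartingaleMeasure μ ∧ μ (InfoSpace T d K Xc p) = 1

/-- A simple (piecewise constant in time) trading strategy: for each path, finitely
many rebalancing times `0 = s_0 < … < s_{num} = T` and holdings `c_k` on `(s_k, s_{k+1}]`. -/
structure SimpleStrategy (T : ℝ) (m : ℕ) where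
  num : Path T m → ℕ
  time : Path T m → ℕ → ℝ
  coeff : Path T m → ℕ → Fin m → ℝ
  time_zero : ∀ ω, time ω 0 = 0
  time_last : ∀ ω, time ω (num ω) = T
  time_mono : ∀ ω, StrictMonoOn (time ω) (Set.Iic (num ω))

/-- The holdings of a simple strategy at time `t`:
`γ(ω)_t = Σ_k c_k(ω)·1_{(s_k(ω), s_{k+1}(ω)]}(t)`. -/
def SimpleStrategy.holding (γ : SimpleStrategy T m) (ω : Path T m) (t : ℝ) : Fin m → ℝ :=
  ∑ k ∈ Finset.range (γ.num ω),
    Set.indicator (Set.Ioc (γ.time ω k) (γ.time ω (k + 1))) (fun _ => γ.coeff ω k) t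

/-- The pathwise gains `(γ·ω)_t = Σ_k c_k(ω)·(ω_{s_{k+1}∧t} − ω_{s_k∧t})`. -/
def SimpleStrategy.gains (γ : SimpleStrategy T m) (ω : Path T m) (t : ℝ) : ℝ :=
  ∑ k ∈ Finset.range (γ.num ω), ∑ i,
    γ.coeff ω k i * (ω.1 (min (γ.time ω (k + 1)) t) i - ω.1 (min (γ.time ω k) t) i)

/-- Non-anticipativity: the holdings at time `t` only depend on the path up to time `t`. -/
def SimpleStrategy.NonAnticipative (γ : SimpleStrategy T m) : Prop :=
  ∀ ω υ : Path T m, ∀ t ∈ Set.Icc (0:ℝ) T,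
    (∀ u ∈ Set.Icc (0:ℝ) t, ω.1 u = υ.1 u) → γ.holding ω t = γ.holding υ t

/-- Admissibility on a set `A`: non-anticipative with gains uniformly bounded below on `A`. -/
def SimpleStrategy.AdmissibleOn (γ : SimpleStrategy T m) (A : Set (Path T m)) : Prop :=
  γ.NonAnticipative ∧ ∃ M > (0:ℝ), ∀ ω ∈ A, ∀ t ∈ Set.Icc (0:ℝ) T, -M ≤ γ.gains ω t

/-- Superhedging cost using simple strategies (admissible on `I`, superreplicating on `A`). -/
def Vsp (I A : Set (Path T m)) (G : Path T m → ℝ) : ℝ :=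
  sInf {x : ℝ | ∃ γ : SimpleStrategy T m, γ.AdmissibleOn I ∧ ∀ ω ∈ A, G ω ≤ x + γ.gains ω T}

/-- Supremum of the expectations of `G` over a set of measures. -/
def Psup (MM : Set (Measure (Path T m))) (G : Path T m → ℝ) : ℝ :=
  sSup ((fun μ => ∫ ω, G ω ∂μ) '' MM)

/-- `ε`-enlargement of `𝔓` inside `I`. -/
def enlarge (I P : Set (Path T m)) (ε : ℝ) : Set (Path T m) :=
  {ω ∈ I | Metric.infDist ω P ≤ ε}

/-- Approximate superhedging cost (no static options): superreplication on some `𝔓^ε`. -/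
def VspApprox (I P : Set (Path T m)) (G : Path T m → ℝ) : ℝ :=
  sInf {x : ℝ | ∃ ε > (0:ℝ), ∃ γ : SimpleStrategy T m, γ.AdmissibleOn I ∧
    ∀ ω ∈ enlarge I P ε, G ω ≤ x + γ.gains ω T}

/-- `λ_𝔓(ω) = (inf_{υ ∈ 𝔓} ‖ω − υ‖) ∧ 1`. -/
def lamP (P : Set (Path T m)) (ω : Path T m) : ℝ := min (Metric.infDist ω P) 1

/-- Sup norm `‖ω‖ = sup_{0≤t≤T} max_i |ω^{(i)}_t|` of a path. -/
def pathNorm (ω : Path T m) : ℝ := ‖ω.1‖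

/-- `‖ω^{(i)}‖ = sup_{0 ≤ t ≤ T} ω^{(i)}_t`. -/
def coordSup (ω : Path T m) (i : Fin m) : ℝ := ⨆ t : Set.Icc (0:ℝ) T, ω.1 t.1 i

/-- Running supremum `sup_{0 ≤ u ≤ t} max_i |ω^{(i)}_u|`. -/
def runSup (ω : Path T m) (t : ℝ) : ℝ := ⨆ u : Set.Icc (0:ℝ) t, ‖ω.1 u.1‖

/-- Times of the `N`-th Lebesgue partition of a path (successive hitting times of moves of
size `2^{-N}`, capped at `T`). -/
def lebTime (N : ℕ) (ω : Path T m) : ℕ → ℝ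
  | 0 => 0
  | k + 1 =>
      sInf ({t : ℝ | lebTime N ω k ≤ t ∧
        dist (ω.1 t) (ω.1 (lebTime N ω k)) = 1 / 2 ^ N} ∪ {T})

/-- The number `m^{(N)}(ω)` of steps of the `N`-th Lebesgue partition. -/
def lebCount (N : ℕ) (ω : Path T m) : ℕ := sInf {k : ℕ | lebTime N ω k = T}

/-- Superhedging cost with a semi-static simple strategy: a static position
`a₀ + Σ_l a_l X_{idx l}` at cost `a₀ + Σ_l a_l 𝒫(X_{idx l})`, plus a simple admissible
dynamic strategy, together superreplicating `G` on `A`. -/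
def VspSemi {ι : Type} (I A : Set (Path T m)) (pay : ι → Path T m → ℝ) (pr : ι → ℝ)
    (G : Path T m → ℝ) : ℝ :=
  sInf {x : ℝ | ∃ (n : ℕ) (a0 : ℝ) (a : Fin n → ℝ) (idx : Fin n → ι),
    x = a0 + ∑ l, a l * pr (idx l) ∧
    ∃ γ : SimpleStrategy T m, γ.AdmissibleOn I ∧
      ∀ ω ∈ A, G ω ≤ (a0 + ∑ l, a l * pay (idx l) ω) + γ.gains ω T}

/-- Approximate semi-static superhedging cost: superreplication is only required on
some `ε`-enlargement `𝔓^ε` of the prediction set. -/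
def VspSemiApprox {ι : Type} (I P : Set (Path T m)) (pay : ι → Path T m → ℝ) (pr : ι → ℝ)
    (G : Path T m → ℝ) : ℝ :=
  sInf {x : ℝ | ∃ ε > (0:ℝ), ∃ (n : ℕ) (a0 : ℝ) (a : Fin n → ℝ) (idx : Fin n → ι),
    x = a0 + ∑ l, a l * pr (idx l) ∧
    ∃ γ : SimpleStrategy T m, γ.AdmissibleOn I ∧
      ∀ ω ∈ enlarge I P ε, G ω ≤ (a0 + ∑ l, a l * pay (idx l) ω) + γ.gains ω T}

/-- Calibrated market models: martingale measures supported on `I` and on the prediction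
set `𝔓`, repricing all statically traded options. -/
def Calibrated {ι : Type} (I P : Set (Path T m)) (pay : ι → Path T m → ℝ) (pr : ι → ℝ) :
    Set (Measure (Path T m)) :=
  {μ | IsMartingaleMeasure μ ∧ μ I = 1 ∧ μ P = 1 ∧ ∀ i, (∫ ω, pay i ω ∂μ) = pr i}

/-- `η`-miscalibrated market models: `P(𝔓^η) > 1 − η` and `|E_P[X] − 𝒫(X)| < η` for all
statically traded options `X`. -/
def CalibratedEta {ι : Type} (I P : Set (Path T m)) (pay : ι → Path T m → ℝ) (pr : ι → ℝ)
    (η : ℝ) : Set (Measure (Path T m)) :=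
  {μ | IsMartingaleMeasure μ ∧ μ I = 1 ∧ 1 - η < (μ (enlarge I P η)).toReal ∧
    ∀ i, |(∫ ω, pay i ω ∂μ) - pr i| < η}

/-- `P̃(G) = lim_{η ↓ 0} sup_{P ∈ M^η} E_P[G]`; since the supremum is monotone in `η`,
the limit equals the infimum over `η > 0`. -/
def Ptilde {ι : Type} (I P : Set (Path T m)) (pay : ι → Path T m → ℝ) (pr : ι → ℝ)
    (G : Path T m → ℝ) : ℝ :=
  sInf {r : ℝ | ∃ η > (0:ℝ), r = Psup (CalibratedEta I P pay pr η) G}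

/-- Bounded-Lipschitz (Lévy–Prokhorov type) distance between measures on `ℝ₊`. -/
def blDist (μ ν : Measure ℝ) : ℝ :=
  ⨆ f : {f : ℝ → ℝ // LipschitzOnWith 1 f (Set.Ici 0) ∧ ∀ x ∈ Set.Ici (0:ℝ), |f x| ≤ 1},
    |(∫ x in Set.Ici (0:ℝ), f.1 x ∂μ) - ∫ x in Set.Ici (0:ℝ), f.1 x ∂ν|

/-- Convex-order increase of a family of measures on `ℝ₊`:
`∫ φ dμ_j ≤ ∫ φ dμ_{j'}` for `j ≤ j'`, for every convex `φ` with finite integrals. -/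
def ConvexOrderIncr {n : ℕ} (μs : Fin (n + 1) → Measure ℝ) : Prop :=
  ∀ φ : ℝ → ℝ, ConvexOn ℝ (Set.Ici 0) φ → (∀ j, IntegrableOn φ (Set.Ici 0) (μs j)) →
    ∀ j j' : Fin (n + 1), j ≤ j' →
      (∫ x in Set.Ici (0:ℝ), φ x ∂(μs j)) ≤ ∫ x in Set.Ici (0:ℝ), φ x ∂(μs j')

/-- `η`-approximate models with exact marginals at the last maturity: the law of
`S^{(i)}_{T_n}` equals `μ^{(i)}_n`, earlier marginals are within `η` in the
bounded-Lipschitz distance, and `P(𝔓^η) ≥ 1 − η`. -/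
def MtildeEta {d K n : ℕ} (Tm : Fin (n + 1) → ℝ) (μs : Fin d → Fin (n + 1) → Measure ℝ)
    (I P : Set (Path T (d + K))) (η : ℝ) : Set (Measure (Path T (d + K))) :=
  {μ | IsMartingaleMeasure μ ∧
    (∀ i : Fin d, μ.map (fun ω => ω.1 (Tm (Fin.last n)) (Fin.castAdd K i)) = μs i (Fin.last n)) ∧
    (∀ i : Fin d, ∀ j : Fin (n + 1), j ≠ Fin.last n →
      blDist (μ.map (fun ω => ω.1 (Tm j) (Fin.castAdd K i))) (μs i j) ≤ η) ∧
    1 - η ≤ (μ (enlarge I P η)).toReal}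

/-- `P̃_{μ,𝔓}(G) = lim_{η↓0} sup_{P ∈ M̃^η_{μ,𝔓}} E_P[G]` (by monotonicity, the limit
equals the infimum over `η > 0`). -/
def PtildeMu {d K n : ℕ} (Tm : Fin (n + 1) → ℝ) (μs : Fin d → Fin (n + 1) → Measure ℝ)
    (I P : Set (Path T (d + K))) (G : Path T (d + K) → ℝ) : ℝ :=
  sInf {r : ℝ | ∃ η > (0:ℝ), r = Psup (MtildeEta Tm μs I P η) G}

/-- Time invariance of a set of paths relative to the maturities `Tm`. -/
def TimeInvariant {n : ℕ} (T : ℝ) (m : ℕ) (Tm : Fin (n + 1) → ℝ) (A : Set (Path T m)) : Prop :=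
  ∀ f : ℝ → ℝ, Monotone f → Continuous f → f 0 = 0 → (∀ j, f (Tm j) = Tm j) →
    ∀ ω ∈ A, ∀ ω' : Path T m, (∀ t ∈ Set.Icc (0:ℝ) T, ω'.1 t = ω.1 (f t)) → ω' ∈ A

/-- The piecewise constant path with value `v k` on `[s k, s (k+1))` for `k < M`,
and value `v (M-1)` at the terminal time `T`. -/
def stepFn (T : ℝ) (m M : ℕ) (s : ℕ → ℝ) (v : ℕ → Fin m → ℝ) : ℝ → Fin m → ℝ :=
  fun t => if t = T then v (M - 1)
    else ∑ k ∈ Finset.range M, Set.indicator (Set.Ico (s k) (s (k + 1))) (fun _ => v k) t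

/-- Sup-norm over `[0,T]` of an arbitrary function of time. -/
def funSup (T : ℝ) {m : ℕ} (f : ℝ → Fin m → ℝ) : ℝ := ⨆ t : Set.Icc (0:ℝ) T, ‖f t.1‖

/-- The `σ`-algebra generated by the `P`-null sets. -/
def nullMS {ΩW : Type} [MeasurableSpace ΩW] (P : Measure ΩW) : MeasurableSpace ΩW :=
  MeasurableSpace.generateFrom {s | P s = 0}

/-- Natural filtration of a process `W`. -/
def natFiltOf {ΩW : Type} [MeasurableSpace ΩW] {E : Type} [MeasurableSpace E]
    (W : ℝ → ΩW → E) (t : ℝ) : MeasurableSpace ΩW :=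
  ⨆ u ∈ Set.Icc (0:ℝ) t, MeasurableSpace.comap (W u) inferInstance

/-- The usual augmentation (by `P`-null sets) of the natural filtration of `W`. -/
def augFiltOf {ΩW : Type} [MeasurableSpace ΩW] {E : Type} [MeasurableSpace E]
    (P : Measure ΩW) (W : ℝ → ΩW → E) (t : ℝ) : MeasurableSpace ΩW :=
  natFiltOf W t ⊔ nullMS P

/-- A finite-dimensional standard Brownian motion: measurable in space, starting at `0`,
with continuous paths, with increments over `[s,t]` distributed as a vector of independent
centred Gaussians of variance `t − s`, independent of the past. -/
def IsBrownianMotion {ΩW : Type} [MeasurableSpace ΩW] (P : Measure ΩW) {k : ℕ}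
    (W : ℝ → ΩW → (Fin k → ℝ)) : Prop :=
  (∀ u : ℝ, Measurable (W u)) ∧
  (∀ᵐ x ∂P, W 0 x = 0) ∧
  (∀ᵐ x ∂P, Continuous fun t => W t x) ∧
  (∀ s t : ℝ, 0 ≤ s → s ≤ t →
    P.map (fun x => W t x - W s x) =
      Measure.pi fun _ : Fin k => ProbabilityTheory.gaussianReal 0 (Real.toNNReal (t - s))) ∧
  (∀ s t : ℝ, 0 ≤ s → s ≤ t →
    ProbabilityTheory.Indep
      (MeasurableSpace.comap (fun x => W t x - W s x) inferInstance) (natFiltOf W s) P)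

/-- Martingale property of `M` with respect to a (raw) filtration `F` under `P`. -/
def MartingaleOn {ΩW : Type} [MeasurableSpace ΩW] (P : Measure ΩW)
    (F : ℝ → MeasurableSpace ΩW) {E : Type} [NormedAddCommGroup E] [NormedSpace ℝ E]
    [CompleteSpace E] (M : ℝ → ΩW → E) : Prop :=
  (∀ t : ℝ, StronglyMeasurable[F t] (M t)) ∧ (∀ t : ℝ, Integrable (M t) P) ∧
    ∀ s t : ℝ, s ≤ t → P[M t | F s] =ᵐ[P] M s

/-- `μ` is the law of a continuous martingale with values in `ℝ₊^m` starting at `(1,…,1)`,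
defined on a complete probability space whose filtration is the usual augmentation of the
natural filtration of a finite-dimensional Brownian motion. -/
def InBrownianClass (μ : Measure (Path T m)) : Prop :=
  ∃ (ΩW : Type) (_mΩ : MeasurableSpace ΩW) (P : Measure ΩW),
    IsProbabilityMeasure P ∧ (∀ s : Set ΩW, P s = 0 → MeasurableSet s) ∧
    ∃ (k : ℕ) (W : ℝ → ΩW → (Fin k → ℝ)), IsBrownianMotion P W ∧
      ∃ Φ : ΩW → Path T m, Measurable Φ ∧ μ = P.map Φ ∧
        MartingaleOn P (augFiltOf P W) (fun t x => (Φ x).1 t)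

/-! Until `ω̃` has moved by `2^{-N}` from its last partition point it stays within `2^{-N}` of
it, so a path within `2^{-N}` of `ω̃` moves by less than `4 · 2^{-N} = 2^{-(N-2)}` in the
meantime. By induction, the `k`-th time of the `(N-2)`-th partition of `ω` is never earlier
than the `k`-th time of the `N`-th partition of `ω̃`, and so `ω` needs at least as many
steps to reach `T`. -/

open Topology

section LebesguePartition

variable {T : ℝ} {m : ℕ}

def lebSet (N : ℕ) (ω : Path T m) (k : ℕ) : Set ℝ :=
  {t : ℝ | lebTime N ω k ≤ t ∧ dist (ω.1 t) (ω.1 (lebTime N ω k)) = 1 / 2 ^ N} ∪ {T}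

theorem lebSet_nonempty (N : ℕ) (ω : Path T m) (k : ℕ) : (lebSet N ω k).Nonempty :=
  ⟨T, Or.inr rfl⟩

theorem lebSet_bddBelow (N : ℕ) (ω : Path T m) (k : ℕ) : BddBelow (lebSet N ω k) := by
  refine ⟨min (lebTime N ω k) T, fun t ht => ?_⟩
  rcases ht with ht | rfl
  · exact min_le_of_left_le ht.1
  · exact min_le_right _ _

theorem isClosed_lebSet (N : ℕ) (ω : Path T m) (k : ℕ) : IsClosed (lebSet N ω k) :=
  ((isClosed_le continuous_const continuous_id).inter
    (isClosed_eq (ω.1.continuous.dist continuous_const) continuous_const)).union isClosed_singleton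

theorem lebTime_succ_mem (N : ℕ) (ω : Path T m) (k : ℕ) :
    lebTime N ω (k + 1) ∈ lebSet N ω k :=
  (isClosed_lebSet N ω k).csInf_mem (lebSet_nonempty N ω k) (lebSet_bddBelow N ω k)

theorem lebTime_le (hT : 0 ≤ T) (N : ℕ) (ω : Path T m) : ∀ k, lebTime N ω k ≤ T
  | 0 => hT
  | k + 1 => csInf_le (lebSet_bddBelow N ω k) (Or.inr rfl)

theorem lebTime_le_succ (hT : 0 ≤ T) (N : ℕ) (ω : Path T m) (k : ℕ) :
    lebTime N ω k ≤ lebTime N ω (k + 1) := by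
  rcases lebTime_succ_mem N ω k with ht | ht
  · exact ht.1
  · exact (mem_singleton_iff.1 ht).symm ▸ lebTime_le hT N ω k

theorem lebTime_monotone (hT : 0 ≤ T) (N : ℕ) (ω : Path T m) : Monotone (lebTime N ω) :=
  monotone_nat_of_le_succ (lebTime_le_succ hT N ω)

theorem dist_lebTime_succ (N : ℕ) (ω : Path T m) {k : ℕ} (hk : lebTime N ω (k + 1) ≠ T) :
    dist (ω.1 (lebTime N ω (k + 1))) (ω.1 (lebTime N ω k)) = 1 / 2 ^ N := by
  rcases lebTime_succ_mem N ω k with ht | ht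
  · exact ht.2
  · exact absurd ht hk

theorem dist_lt_of_mem_Ico_lebTime (N : ℕ) (ω : Path T m) {k : ℕ} {t : ℝ}
    (ht : t ∈ Ico (lebTime N ω k) (lebTime N ω (k + 1))) :
    dist (ω.1 t) (ω.1 (lebTime N ω k)) < 1 / 2 ^ N := by
  by_contra! hfar
  obtain ⟨s, hs, hs_hit⟩ := intermediate_value_Icc ht.1
    (ω.1.continuous.dist continuous_const).continuousOn
    (show (1 : ℝ) / 2 ^ N ∈ Icc (dist (ω.1 (lebTime N ω k)) (ω.1 (lebTime N ω k)))
      (dist (ω.1 t) (ω.1 (lebTime N ω k))) from ⟨by rw [dist_self]; positivity, hfar⟩)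
  have : lebTime N ω (k + 1) ≤ s := csInf_le (lebSet_bddBelow N ω k) (Or.inl ⟨hs.1, hs_hit⟩)
  exact (this.trans hs.2).not_gt ht.2

/-- If the partition never reached `T`, its times would converge, and by continuity the
increments `2^{-N}` of `ω` along them would tend to `0`. -/
theorem exists_lebTime_eq (hT : 0 ≤ T) (N : ℕ) (ω : Path T m) : ∃ k, lebTime N ω k = T := by
  by_contra! hne
  obtain ⟨τ, hτ⟩ : ∃ τ, Tendsto (lebTime N ω) atTop (𝓝 τ) :=
    ⟨_, tendsto_atTop_ciSup (lebTime_monotone hT N ω)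
      ⟨T, forall_mem_range.2 (lebTime_le hT N ω)⟩⟩
  have hω := (ω.1.continuous.tendsto τ).comp hτ
  have hincr : Tendsto (fun k => dist (ω.1 (lebTime N ω (k + 1))) (ω.1 (lebTime N ω k)))
      atTop (𝓝 0) := by
    simpa using ((tendsto_add_atTop_iff_nat 1).2 hω).dist hω
  simp only [dist_lebTime_succ N ω (hne _)] at hincr
  exact (one_div_pos.2 (pow_pos two_pos N)).ne' (tendsto_nhds_unique tendsto_const_nhds hincr)

theorem lebTime_lebCount (hT : 0 ≤ T) (N : ℕ) (ω : Path T m) :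
    lebTime N ω (lebCount N ω) = T :=
  Nat.sInf_mem (exists_lebTime_eq hT N ω)

theorem dist_apply_le_dist (ω ω' : Path T m) (t : ℝ) : dist (ω.1 t) (ω'.1 t) ≤ dist ω ω' :=
  (BoundedContinuousFunction.dist_coe_le_dist t).trans_eq (Subtype.dist_eq ω ω').symm

theorem lebTime_le_lebTime_of_dist (hT : 0 ≤ T) {N N' : ℕ} {ω ω' : Path T m}
    (h : 2 * (dist ω ω' + 1 / 2 ^ N) ≤ 1 / 2 ^ N') (k : ℕ) :
    lebTime N ω' k ≤ lebTime N' ω k := by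
  induction k with
  | zero => rfl
  | succ k ih =>
    by_cases hk : lebTime N' ω (k + 1) = T
    · exact hk.symm ▸ lebTime_le hT N ω' (k + 1)
    by_contra! hlt
    set τ := lebTime N' ω k
    set τ' := lebTime N' ω (k + 1)
    have hττ' : τ ≤ τ' := lebTime_le_succ hT N' ω k
    have hτ : dist (ω'.1 τ) (ω'.1 (lebTime N ω' k)) < 1 / 2 ^ N :=
      dist_lt_of_mem_Ico_lebTime N ω' ⟨ih, hττ'.trans_lt hlt⟩
    have hτ' : dist (ω'.1 τ') (ω'.1 (lebTime N ω' k)) < 1 / 2 ^ N :=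
      dist_lt_of_mem_Ico_lebTime N ω' ⟨ih.trans hττ', hlt⟩
    have hω'_move : dist (ω'.1 τ') (ω'.1 τ) < 2 * (1 / 2 ^ N) := by
      linarith [dist_triangle_right (ω'.1 τ') (ω'.1 τ) (ω'.1 (lebTime N ω' k))]
    have := calc
      1 / 2 ^ N' = dist (ω.1 τ') (ω.1 τ) := (dist_lebTime_succ N' ω hk).symm
      _ ≤ dist (ω.1 τ') (ω'.1 τ') + dist (ω'.1 τ') (ω'.1 τ) + dist (ω'.1 τ) (ω.1 τ) :=
        dist_triangle4 _ _ _ _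
      _ ≤ dist ω ω' + dist (ω'.1 τ') (ω'.1 τ) + dist ω ω' := by
        rw [dist_comm (ω'.1 τ)]
        gcongr <;> exact dist_apply_le_dist ω ω' _
    linarith

theorem lebCount_le_lebCount_of_dist (hT : 0 ≤ T) {N N' : ℕ} {ω ω' : Path T m}
    (h : 2 * (dist ω ω' + 1 / 2 ^ N) ≤ 1 / 2 ^ N') : lebCount N' ω ≤ lebCount N ω' := by
  refine Nat.sInf_le (le_antisymm (lebTime_le hT N' ω _) ?_)
  simpa only [lebTime_lebCount hT N ω'] using lebTime_le_lebTime_of_dist hT h (lebCount N ω')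

end LebesguePartition

theorem statement16_general (T : ℝ) (hT : 0 < T) (m : ℕ) (N : ℕ) (hN : 2 ≤ N)
    (ω ω' : Path T m) (h : dist ω ω' < 1 / 2 ^ N) :
    lebCount (N - 2) ω ≤ lebCount N ω' := by
  refine lebCount_le_lebCount_of_dist hT.le ?_
  obtain ⟨M, rfl⟩ : ∃ M, N = M + 2 := ⟨N - 2, by omega⟩
  have h4 : (1 : ℝ) / 2 ^ (M + 2 - 2) = 4 * (1 / 2 ^ (M + 2)) := by
    rw [Nat.add_sub_cancel, pow_add]
    field_simp
    norm_num
  rw [h4]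
  linarith

theorem statement16 (T : ℝ) (hT : 0 < T) (m : ℕ) (hm : 1 ≤ m) (N : ℕ) (hN : 2 ≤ N)
    (ω ω' : Path T m) (h : dist ω ω' < 1 / 2 ^ N) :
    lebCount (N - 2) ω ≤ lebCount N ω' :=
  statement16_general T hT m N hN ω ω' h

end RobustFinance
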